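/- For 0 < p < 1/2, let R(K) = 1 + Kp log₂ p + K(1-p) log₂(1-p) - ∑_{l=0}^{K-1} C(K-1,l)(q^l p^{K-l} + q^{K-l} p^l) log₂(q^l p^{K-l} + q^{K-l} p^l) where q = 1-p. Then R(K) ≤ 1 for all K ≥ 1 and R(K) → 1 as K → ∞. -/

import Mathlib

open Real Filter

/-- Achievable rate of coded transmission with `K` forwarding relays,
effective cross-over probability `p`, `q = 1 - p`. -/
noncomputable def fwdRate (p : ℝ) (K : ℕ) : ℝ :=
  1 + K * p * logb 2 p + K * (1-p) * logb 2 (1-p)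
    - ∑ l ∈ Finset.range K, (Nat.choose (K-1) l : ℝ)
        * ((1-p) ^ l * p ^ (K - l) + (1-p) ^ (K - l) * p ^ l)
        * logb 2 ((1-p) ^ l * p ^ (K - l) + (1-p) ^ (K - l) * p ^ l)

/-! Write `φ x = x log₂ x`, `q = 1 - p`, `bₗ = qˡ p^(K-l)` and `cₗ = q^(K-l) pˡ`.
Pascal's rule and the binomial mean give `∑ₗ C(K-1,l) (φ bₗ + φ cₗ) = K (φ p + φ q)`, so
`1 - R(K)` is the sum of the merging gaps `C(K-1,l) (φ (bₗ + cₗ) - φ bₗ - φ cₗ)`. Each gap is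
nonnegative because `log₂` is increasing, and since `log (1 + x) ≤ 2 √x` it is at most
`4 √(bₗ cₗ) / log 2 = 4 √(pq)^K / log 2`. Summing against the weights `C(K-1,l)`, which add up
to `2^(K-1)`, gives `1 - R(K) ≤ (2 / log 2) (2 √(pq))^K`, and `2 √(pq) < 1` as `p ≠ 1/2`. -/

open Finset

theorem Real.log_one_add_le_two_mul_sqrt {x : ℝ} (hx : 0 ≤ x) : log (1 + x) ≤ 2 * √x := by
  have hsq : 1 + x ≤ (1 + √x) ^ 2 := by nlinarith [sq_sqrt hx, sqrt_nonneg x]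
  calc log (1 + x) ≤ log ((1 + √x) ^ 2) := log_le_log (by positivity) hsq
    _ = 2 * log (1 + √x) := by rw [log_pow]; push_cast; ring
    _ ≤ 2 * √x := by linarith [log_le_sub_one_of_pos (by positivity : 0 < 1 + √x)]

theorem Real.mul_log_add_div_self_le {b c : ℝ} (hb : 0 < b) (hc : 0 ≤ c) :
    b * log ((b + c) / b) ≤ 2 * √(b * c) :=
  calc b * log ((b + c) / b) = b * log (1 + c / b) := by rw [add_div, div_self hb.ne']
    _ ≤ b * (2 * √(c / b)) := by gcongr; exact log_one_add_le_two_mul_sqrt (by positivity)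
    _ = 2 * √(b * c) := by
      rw [show b * c = b ^ 2 * (c / b) by field_simp, sqrt_mul (by positivity), sqrt_sq hb.le]
      ring

noncomputable def mulLogbGap (a b c : ℝ) : ℝ :=
  (b + c) * logb a (b + c) - (b * logb a b + c * logb a c)

theorem mulLogbGap_eq {a b c : ℝ} (hb : 0 < b) (hc : 0 < c) :
    mulLogbGap a b c = (b * log ((b + c) / b) + c * log ((b + c) / c)) / log a := by
  simp only [mulLogbGap, logb, log_div (by positivity : b + c ≠ 0) hb.ne',
    log_div (by positivity : b + c ≠ 0) hc.ne']
  ring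

theorem mulLogbGap_nonneg {a b c : ℝ} (ha : 1 < a) (hb : 0 < b) (hc : 0 < c) :
    0 ≤ mulLogbGap a b c := by
  have hb' : 0 ≤ log ((b + c) / b) := log_nonneg ((one_le_div hb).2 (by linarith))
  have hc' : 0 ≤ log ((b + c) / c) := log_nonneg ((one_le_div hc).2 (by linarith))
  rw [mulLogbGap_eq hb hc]
  have hlog := log_pos ha
  positivity

theorem mulLogbGap_le {a b c : ℝ} (ha : 1 < a) (hb : 0 < b) (hc : 0 < c) :
    mulLogbGap a b c ≤ 4 * √(b * c) / log a := by
  have hbc := mul_log_add_div_self_le hb hc.le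
  have hcb := mul_log_add_div_self_le hc hb.le
  rw [add_comm c b, mul_comm c b] at hcb
  rw [mulLogbGap_eq hb hc]
  gcongr
  · exact (log_pos ha).le
  · linarith

theorem sum_range_choose_mul_add_swap {R : Type*} [CommSemiring R] (g : ℕ → ℕ → R) (m : ℕ) :
    ∑ l ∈ range (m + 1), (m.choose l : R) * (g l (m + 1 - l) + g (m + 1 - l) l) =
      ∑ j ∈ range (m + 2), ((m + 1).choose j : R) * g j (m + 1 - j) := by
  rw [← Nat.sum_antidiagonal_eq_sum_range_succ (fun i j => ((m + 1).choose i : R) * g i j),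
    Finset.sum_antidiagonal_choose_succ_mul,
    ← Nat.sum_antidiagonal_swap (f := fun ij => (m.choose ij.2 : R) * g (ij.1 + 1) ij.2)]
  simp only [Prod.fst_swap, Prod.snd_swap]
  rw [Nat.sum_antidiagonal_eq_sum_range_succ (fun i j => (m.choose i : R) * g i (j + 1)),
    Nat.sum_antidiagonal_eq_sum_range_succ (fun i j => (m.choose i : R) * g (j + 1) i),
    ← sum_add_distrib]
  refine sum_congr rfl fun l hl => ?_
  rw [show m - l + 1 = m + 1 - l by have := mem_range.1 hl; omega]
  ring

theorem sum_range_choose_mul_logb_pow_mul_pow {p q : ℝ} (a : ℝ) (hp : p ≠ 0) (hq : q ≠ 0)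
    (hpq : q + p = 1) (n : ℕ) :
    ∑ j ∈ range (n + 1), (n.choose j : ℝ) * (q ^ j * p ^ (n - j) * logb a (q ^ j * p ^ (n - j))) =
      n * (q * logb a q + p * logb a p) := by
  obtain rfl : p = 1 - q := by linarith
  set w : ℕ → ℝ := fun j => n.choose j * (q ^ j * (1 - q) ^ (n - j)) with hw
  have hB (j : ℕ) : (bernsteinPolynomial ℝ n j).eval q = w j := by
    simp [hw, bernsteinPolynomial, mul_assoc]
  have hsum : ∑ j ∈ range (n + 1), w j = 1 := by
    simpa [Polynomial.eval_finsetSum, hB] using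
      congrArg (Polynomial.eval q) (bernsteinPolynomial.sum ℝ n)
  have hmean : ∑ j ∈ range (n + 1), (j : ℝ) * w j = n * q := by
    simpa [Polynomial.eval_finsetSum, hB] using
      congrArg (Polynomial.eval q) (bernsteinPolynomial.sum_smul ℝ n)
  have hterm : ∀ j ∈ range (n + 1),
      (n.choose j : ℝ) * (q ^ j * (1 - q) ^ (n - j) * logb a (q ^ j * (1 - q) ^ (n - j))) =
        logb a (1 - q) * n * w j + (logb a q - logb a (1 - q)) * ((j : ℝ) * w j) := by
    intro j hj
    rw [hw, logb_mul (pow_ne_zero _ hq) (pow_ne_zero _ hp), logb_pow, logb_pow,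
      Nat.cast_sub (Nat.lt_succ_iff.1 (mem_range.1 hj))]
    ring
  rw [sum_congr rfl hterm, sum_add_distrib, ← mul_sum, ← mul_sum, hsum, hmean]
  ring

theorem fwdRate_eq_one_sub_sum_mulLogbGap {p : ℝ} (hp0 : p ≠ 0) (hp1 : p ≠ 1) (K : ℕ) :
    fwdRate p K = 1 - ∑ l ∈ range K, ((K - 1).choose l : ℝ) *
      mulLogbGap 2 ((1 - p) ^ l * p ^ (K - l)) ((1 - p) ^ (K - l) * p ^ l) := by
  cases K with
  | zero => simp [fwdRate]
  | succ m =>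
    have hsplit := sum_range_choose_mul_add_swap
      (fun i j => (1 - p) ^ i * p ^ j * logb 2 ((1 - p) ^ i * p ^ j)) m
    rw [sum_range_choose_mul_logb_pow_mul_pow 2 hp0 (sub_ne_zero.2 hp1.symm) (by ring)] at hsplit
    simp only [fwdRate, mulLogbGap, Nat.add_sub_cancel, mul_sub, sum_sub_distrib]
    rw [hsplit]
    simp only [mul_assoc]
    push_cast
    ring

theorem fwdRate_le_one {p : ℝ} (hp0 : 0 < p) (hp1 : p < 1) (K : ℕ) : fwdRate p K ≤ 1 := by
  have hq : 0 < 1 - p := sub_pos.2 hp1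
  rw [fwdRate_eq_one_sub_sum_mulLogbGap hp0.ne' hp1.ne]
  exact sub_le_self _ <| sum_nonneg fun l _ => mul_nonneg (Nat.cast_nonneg _) <|
    mulLogbGap_nonneg one_lt_two (by positivity) (by positivity)

theorem one_sub_fwdRate_le {p : ℝ} (hp0 : 0 < p) (hp1 : p < 1) (K : ℕ) :
    1 - fwdRate p K ≤ 2 / log 2 * (2 * √(p * (1 - p))) ^ K := by
  have hq : 0 < 1 - p := sub_pos.2 hp1
  have hprod (l : ℕ) (hl : l ≤ K) :
      √((1 - p) ^ l * p ^ (K - l) * ((1 - p) ^ (K - l) * p ^ l)) = √(p * (1 - p)) ^ K := by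
    have hpow : (1 - p) ^ l * p ^ (K - l) * ((1 - p) ^ (K - l) * p ^ l) =
        (√(p * (1 - p)) ^ K) ^ 2 := by
      obtain ⟨j, rfl⟩ := Nat.exists_eq_add_of_le hl
      rw [← pow_mul, mul_comm _ 2, pow_mul, sq_sqrt (by positivity), mul_pow,
        Nat.add_sub_cancel_left]
      ring
    rw [hpow, sqrt_sq (by positivity)]
  rw [fwdRate_eq_one_sub_sum_mulLogbGap hp0.ne' hp1.ne, sub_sub_cancel]
  calc ∑ l ∈ range K, ((K - 1).choose l : ℝ) *
        mulLogbGap 2 ((1 - p) ^ l * p ^ (K - l)) ((1 - p) ^ (K - l) * p ^ l)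
      ≤ ∑ l ∈ range K, ((K - 1).choose l : ℝ) * (4 * √(p * (1 - p)) ^ K / log 2) := by
        refine sum_le_sum fun l hl => ?_
        rw [← hprod l (mem_range.1 hl).le]
        gcongr
        exact mulLogbGap_le one_lt_two (by positivity) (by positivity)
    _ = (∑ l ∈ range K, ((K - 1).choose l : ℝ)) * (4 * √(p * (1 - p)) ^ K / log 2) :=
        (sum_mul ..).symm
    _ ≤ 2 / log 2 * (2 * √(p * (1 - p))) ^ K := by
        cases K with
        | zero => simp only [range_zero, sum_empty, zero_mul, pow_zero, mul_one]; positivity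
        | succ m =>
          rw [Nat.add_sub_cancel, ← Nat.cast_sum, Nat.sum_range_choose]
          apply le_of_eq
          push_cast
          ring

theorem two_mul_sqrt_mul_one_sub_lt_one {p : ℝ} (hp : p ≠ 1 / 2) : 2 * √(p * (1 - p)) < 1 := by
  have hsq : 0 < (p - 1 / 2) ^ 2 := sq_pos_of_ne_zero (sub_ne_zero.2 hp)
  have hlt : √(p * (1 - p)) < 1 / 2 := (sqrt_lt' one_half_pos).2 (by linarith)
  linarith

theorem fwdRate_le_one_tendsto_one (p : ℝ) (hp : 0 < p) (hp' : p < 1/2) :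
    (∀ K : ℕ, 1 ≤ K → fwdRate p K ≤ 1) ∧
      Tendsto (fun K : ℕ => fwdRate p K) atTop (nhds 1) := by
  have hp1 : p < 1 := by linarith
  refine ⟨fun K _ => fwdRate_le_one hp hp1 K, ?_⟩
  have hgeom := tendsto_pow_atTop_nhds_zero_of_lt_one (by positivity)
    (two_mul_sqrt_mul_one_sub_lt_one hp'.ne)
  have hlower : Tendsto (fun K : ℕ => 1 - 2 / log 2 * (2 * √(p * (1 - p))) ^ K) atTop (nhds 1) := by
    simpa using (hgeom.const_mul (2 / log 2)).const_sub 1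
  refine tendsto_of_tendsto_of_tendsto_of_le_of_le hlower tendsto_const_nhds (fun K => ?_)
    (fwdRate_le_one hp hp1)
  linarith [one_sub_fwdRate_le hp hp1 K]
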